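/- arXiv:math/0501372 — 3 statements merged into one kernel-verified Lean document; each statement's English description precedes it below -/
import Mathlib

section
/- Let A be an algebraic lattice and let B be a closure system in A, that is, a subset of A closed under infima (computed in A) of arbitrary, possibly empty, subsets of B, and closed under suprema (computed in A) of nonempty upward directed subsets of B. Then B, equipped with the order induced from A, is an algebraic lattice. -/
/-! The closure `a ↦ sInf {x ∈ B | a ≤ x}` is left adjoint to the inclusion `B → A`, so `B` has all joins
and each `b ∈ B` is the join of the closures of the compact elements of `A` below `b`. Because the
inclusion preserves directed joins, this left adjoint sends compact elements to compact ones. -/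

/-- An element `a` of a partially ordered set is *compact* if for every nonempty upward
directed subset `X` having a least upper bound `s` with `a ≤ s`, there exists `x ∈ X`
with `a ≤ x`. -/
def IsCompactIn {L : Type*} [PartialOrder L] (a : L) : Prop :=
  ∀ X : Set L, X.Nonempty → DirectedOn (· ≤ ·) X → ∀ s : L, IsLUB X s → a ≤ s → ∃ x ∈ X, a ≤ x

section GaloisConnection

variable {α β : Type*} [CompleteLattice α] [PartialOrder β] {l : α → β} {u : β → α}

theorem GaloisConnection.isCompactIn_l (gc : GaloisConnection l u) (hu : ScottContinuous u)
    {k : α} (hk : IsCompactElement k) : IsCompactIn (l k) := by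
  intro X hX_ne hX_dir s hs hks
  have hu_dir : DirectedOn (· ≤ ·) (u '' X) := hX_dir.mono_comp gc.monotone_u
  have hk_sup : k ≤ sSup (u '' X) := (hu hX_ne hX_dir hs).sSup_eq ▸ gc.le_u hks
  obtain ⟨_, ⟨x, hx, rfl⟩, hkx⟩ :=
    (CompleteLattice.isCompactElement_iff_le_of_directed_sSup_le α k).mp hk _
      (hX_ne.image u) hu_dir hk_sup
  exact ⟨x, hx, gc.l_le hkx⟩

theorem GaloisInsertion.isLUB_l_compact_le_u [IsCompactlyGenerated α]
    (gi : GaloisInsertion l u) (b : β) :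
    IsLUB (l '' {k | IsCompactElement k ∧ k ≤ u b}) b := by
  simpa only [sSup_compact_le_eq, gi.l_u_eq] using
    gi.gc.isLUB_l_image (isLUB_sSup {k | IsCompactElement k ∧ k ≤ u b})

end GaloisConnection

section ClosureSystem

variable {A : Type*} [CompleteLattice A] {B : Set A}

theorem scottContinuous_subtype_val_of_directed_sSup_mem
    (h_dirsup : ∀ s : Set A, s ⊆ B → s.Nonempty → DirectedOn (· ≤ ·) s → sSup s ∈ B) :
    ScottContinuous (Subtype.val : B → A) := by
  intro d hd_ne hd_dir a ha
  have hsup_mem : sSup (Subtype.val '' d) ∈ B :=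
    h_dirsup _ (Subtype.coe_image_subset B d) (hd_ne.image _)
      (hd_dir.mono_comp (Subtype.mono_coe _))
  have ha_le : a ≤ ⟨_, hsup_mem⟩ := ha.2 fun x hx ↦ le_sSup (Set.mem_image_of_mem _ hx)
  refine ⟨(Subtype.mono_coe _).mem_upperBounds_image ha.1, fun y hy ↦ ?_⟩
  exact (Subtype.coe_le_coe.2 ha_le).trans (sSup_le hy)

/-- The closed elements of `ClosureOperator.ofCompletePred (· ∈ B)` are definitionally the
elements of `B`, with the same order. -/
def closureSystemGaloisInsertion (h_inf : ∀ s : Set A, s ⊆ B → sInf s ∈ B) :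
    GaloisInsertion (β := B) (ClosureOperator.ofCompletePred (· ∈ B) h_inf).toCloseds
      Subtype.val :=
  (ClosureOperator.ofCompletePred (· ∈ B) h_inf).gi

end ClosureSystem

/-- Let `A` be an algebraic lattice and let `B` be a closure system in `A`,
i.e. a subset closed under arbitrary infima (computed in `A`) and under suprema (computed in
`A`) of nonempty upward directed subsets.  Then `B`, with the induced order, is an algebraic
lattice: it is a complete lattice and every element is a join of compact elements of `B`. -/
theorem closure_system_is_algebraic {A : Type*} [CompleteLattice A] [IsCompactlyGenerated A]
    (B : Set A)
    (h_inf : ∀ s : Set A, s ⊆ B → sInf s ∈ B)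
    (h_dirsup : ∀ s : Set A, s ⊆ B → s.Nonempty → DirectedOn (· ≤ ·) s → sSup s ∈ B) :
    (∀ S : Set ↥B, ∃ l : ↥B, IsLUB S l) ∧
    (∀ b : ↥B, ∃ C : Set ↥B, (∀ c ∈ C, IsCompactIn c) ∧ IsLUB C b) := by
  have gi := closureSystemGaloisInsertion h_inf
  refine ⟨fun S ↦ ⟨_, gi.isLUB_of_u_image (isLUB_sSup _)⟩,
    fun b ↦ ⟨_, ?_, gi.isLUB_l_compact_le_u b⟩⟩
  rintro _ ⟨k, ⟨hk, -⟩, rfl⟩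
  exact gi.gc.isCompactIn_l (scottContinuous_subtype_val_of_directed_sSup_mem h_dirsup) hk
end

section
/- Let S be a conditionally co-Brouwerian lattice, let B be a ⟨∨,0⟩-semilattice, and let A be a ⟨∨,0⟩-subsemilattice of B that is cofinal in B (every element of B lies below some element of A). Then every ⟨∨,0⟩-homomorphism from A to S extends to a ⟨∨,0⟩-homomorphism from B to S. -/
/-- `g` is the greatest lower bound of `X` *within* the principal ideal `↓s`:
`g ≤ s`, `g` is a lower bound of `X`, and every lower bound of `X` lying below `s`
is below `g`. -/
def IsRelGLB {S : Type*} [Lattice S] (s : S) (X : Set S) (g : S) : Prop :=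
  g ≤ s ∧ (∀ x ∈ X, g ≤ x) ∧ ∀ l ≤ s, (∀ x ∈ X, l ≤ x) → l ≤ g

/-- A lattice `S` is *conditionally co-Brouwerian* if every principal ideal `↓s` of `S` is
co-Brouwerian, i.e. is a complete lattice (every subset of `↓s` has a greatest lower bound
within `↓s`; note `↓s` has largest element `s`) satisfying the infinite meet distributivity
law `a ⊔ ⨅ᵢ xᵢ = ⨅ᵢ (a ⊔ xᵢ)`, the infima being computed within `↓s`. -/
def ConditionallyCoBrouwerian (S : Type*) [Lattice S] : Prop :=
  ∀ s : S,
    (∀ X : Set S, X ⊆ Set.Iic s → ∃ g, IsRelGLB s X g) ∧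
    (∀ a ≤ s, ∀ X : Set S, X ⊆ Set.Iic s → ∀ g : S, IsRelGLB s X g →
      IsRelGLB s ((fun x => a ⊔ x) '' X) (a ⊔ g))

/-- Let `S` be a conditionally co-Brouwerian lattice, let `B` be a
`⟨∨,0⟩`-semilattice and let `A` be a cofinal `⟨∨,0⟩`-subsemilattice of `B`.  Then every
`⟨∨,0⟩`-homomorphism from `A` to `S` extends to a `⟨∨,0⟩`-homomorphism from `B` to `S`. -/
theorem extend_sup_zero_hom_of_condCoBrouwerian {S B : Type*} [Lattice S] [OrderBot S]
    [SemilatticeSup B] [OrderBot B]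
    (hS : ConditionallyCoBrouwerian S)
    (A : Set B) (hA0 : ⊥ ∈ A) (hAsup : ∀ x ∈ A, ∀ y ∈ A, x ⊔ y ∈ A)
    (hAcof : ∀ b : B, ∃ a ∈ A, b ≤ a)
    (f : B → S) (hf0 : f ⊥ = ⊥) (hfsup : ∀ x ∈ A, ∀ y ∈ A, f (x ⊔ y) = f x ⊔ f y) :
    ∃ g : B → S, g ⊥ = ⊥ ∧ (∀ x y : B, g (x ⊔ y) = g x ⊔ g y) ∧ ∀ x ∈ A, g x = f x := by
  classical
  -- monotonicity of f on A
  have hmono : ∀ a ∈ A, ∀ a' ∈ A, a ≤ a' → f a ≤ f a' := by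
    intro a ha a' ha' hle
    have : f (a ⊔ a') = f a ⊔ f a' := hfsup a ha a' ha'
    rw [sup_eq_right.mpr hle] at this
    rw [this]; exact le_sup_left
  -- S satisfies le_sup_inf (distributivity)
  have hls : ∀ x y z : S, (x ⊔ y) ⊓ (x ⊔ z) ≤ x ⊔ y ⊓ z := by
    intro x y z
    set s := x ⊔ y ⊔ z with hs
    have hxs : x ≤ s := le_sup_left.trans le_sup_left |>.trans le_rfl
    have hys : y ≤ s := le_sup_right.trans le_sup_left
    have hzs : z ≤ s := le_sup_right
    have hX : ({y, z} : Set S) ⊆ Set.Iic s := by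
      rintro t (rfl | rfl) <;> simp [hys, hzs]
    have hglb : IsRelGLB s ({y, z} : Set S) (y ⊓ z) := by
      refine ⟨inf_le_left.trans hys, ?_, ?_⟩
      · rintro t (rfl | rfl); exact inf_le_left; exact inf_le_right
      · intro l _ hl
        exact le_inf (hl y (Or.inl rfl)) (hl z (Or.inr rfl))
    have := (hS s).2 x hxs {y, z} hX (y ⊓ z) hglb
    refine this.2.2 _ (inf_le_left.trans (sup_le hxs hys)) ?_
    rintro t ⟨u, (rfl | rfl), rfl⟩
    · exact inf_le_left
    · exact inf_le_right
  have hinf : ∀ p q r : S, p ⊓ (q ⊔ r) ≤ (p ⊓ q) ⊔ (p ⊓ r) := by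
    intro p q r
    have s1 : p ⊓ (q ⊔ r) ≤ r ⊔ (p ⊓ q) := by
      refine le_trans (le_inf ?_ ?_) (hls r p q)
      · exact inf_le_left.trans le_sup_right
      · exact inf_le_right.trans (sup_comm q r).le
    have s2 : p ⊓ (q ⊔ r) ≤ ((p ⊓ q) ⊔ p) ⊓ ((p ⊓ q) ⊔ r) := by
      refine le_inf (inf_le_left.trans le_sup_right) (s1.trans (sup_comm r (p ⊓ q)).le)
    exact s2.trans (hls (p ⊓ q) p r)
  have hdist : ∀ p q r : S, (p ⊔ q) ⊓ r ≤ (p ⊓ r) ⊔ (q ⊓ r) := by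
    intro p q r
    calc (p ⊔ q) ⊓ r = r ⊓ (p ⊔ q) := inf_comm _ _
      _ ≤ (r ⊓ p) ⊔ (r ⊓ q) := hinf r p q
      _ = (p ⊓ r) ⊔ (q ⊓ r) := by rw [inf_comm r p, inf_comm r q]
  -- existence of absolute GLBs of the sets {f a : a ∈ A, b ≤ a}
  have hex : ∀ b : B, ∃ gb : S,
      (∀ a ∈ A, b ≤ a → gb ≤ f a) ∧ ∀ l : S, (∀ a ∈ A, b ≤ a → l ≤ f a) → l ≤ gb := by
    intro b
    obtain ⟨c, hc, hbc⟩ := hAcof b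
    set s := f c with hsdef
    set X : Set S := {t | ∃ a, a ∈ A ∧ b ≤ a ∧ t = f a ⊓ s} with hXdef
    have hX : X ⊆ Set.Iic s := by rintro t ⟨a, _, _, rfl⟩; exact inf_le_right
    obtain ⟨gb, hgb⟩ := (hS s).1 X hX
    refine ⟨gb, ?_, ?_⟩
    · intro a ha hba
      exact (hgb.2.1 _ ⟨a, ha, hba, rfl⟩).trans inf_le_left
    · intro l hl
      refine hgb.2.2 l (hl c hc hbc) ?_
      rintro t ⟨a, ha, hba, rfl⟩
      exact le_inf (hl a ha hba) (hl c hc hbc)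
  choose g hg1 hg2 using hex
  -- g is a relative GLB of the meet-truncated set, for any upper bound c
  have hrel : ∀ b : B, ∀ c ∈ A, b ≤ c →
      IsRelGLB (f c) {t | ∃ a, a ∈ A ∧ b ≤ a ∧ t = f a ⊓ f c} (g b) := by
    intro b c hc hbc
    refine ⟨hg1 b c hc hbc, ?_, ?_⟩
    · rintro t ⟨a, ha, hba, rfl⟩
      exact le_inf (hg1 b a ha hba) (hg1 b c hc hbc)
    · intro l hls' hl
      refine hg2 b l ?_
      intro a ha hba
      exact (hl _ ⟨a, ha, hba, rfl⟩).trans inf_le_left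
  refine ⟨g, ?_, ?_, ?_⟩
  · -- g ⊥ = ⊥
    exact le_antisymm (by simpa [hf0] using hg1 ⊥ ⊥ hA0 le_rfl) bot_le
  · -- sup law
    intro x y
    obtain ⟨c, hc, hxyc⟩ := hAcof (x ⊔ y)
    have hxc : x ≤ c := le_sup_left.trans hxyc
    have hyc : y ≤ c := le_sup_right.trans hxyc
    set s := f c with hsdef
    have hgxy_s : g (x ⊔ y) ≤ s := hg1 _ c hc hxyc
    have hgy_s : g y ≤ s := hg1 _ c hc hyc
    -- easy direction
    have h1 : g x ⊔ g y ≤ g (x ⊔ y) := by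
      refine hg2 _ _ ?_
      intro a ha hba
      exact sup_le (hg1 x a ha (le_sup_left.trans hba)) (hg1 y a ha (le_sup_right.trans hba))
    -- hard direction
    have key : ∀ a ∈ A, x ≤ a → g (x ⊔ y) ≤ (f a ⊓ s) ⊔ g y := by
      intro a ha hxa
      have hYy : {t | ∃ a', a' ∈ A ∧ y ≤ a' ∧ t = f a' ⊓ s} ⊆ Set.Iic s := by
        rintro t ⟨a', _, _, rfl⟩; exact inf_le_right
      have hrel' := hrel y c hc hyc
      have hd := (hS s).2 (f a ⊓ s) inf_le_right _ hYy (g y) hrel'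
      refine hd.2.2 _ hgxy_s ?_
      rintro t ⟨u, ⟨a', ha', hya', rfl⟩, rfl⟩
      -- goal: g (x ⊔ y) ≤ (f a ⊓ s) ⊔ (f a' ⊓ s)
      have h3 : g (x ⊔ y) ≤ (f a ⊔ f a') ⊓ s := by
        refine le_inf ?_ hgxy_s
        have := hg1 (x ⊔ y) (a ⊔ a') (hAsup a ha a' ha') (sup_le_sup hxa hya')
        rwa [hfsup a ha a' ha'] at this
      exact h3.trans (hdist (f a) (f a') s)
    have h2 : g (x ⊔ y) ≤ g x ⊔ g y := by
      have hYx : {t | ∃ a, a ∈ A ∧ x ≤ a ∧ t = f a ⊓ s} ⊆ Set.Iic s := by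
        rintro t ⟨a, _, _, rfl⟩; exact inf_le_right
      have hrel' := hrel x c hc hxc
      have hd := (hS s).2 (g y) hgy_s _ hYx (g x) hrel'
      have := hd.2.2 _ hgxy_s ?_
      · exact this.trans (sup_comm (g y) (g x)).le
      · rintro t ⟨u, ⟨a, ha, hxa, rfl⟩, rfl⟩
        exact (key a ha hxa).trans (sup_comm (f a ⊓ s) (g y)).le
    exact le_antisymm h2 h1
  · -- g extends f
    intro a ha
    refine le_antisymm (hg1 a a ha le_rfl) (hg2 a _ ?_)
    intro a' ha' haa'
    exact hmono a ha a' ha' haa'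
end

section
/- For every limit ordinal λ, the map χ_λ : Int λ → 2 is a surjective homomorphism preserving binary joins, binary meets, 0, and 1, from the Boolean algebra Int λ onto the two-element bounded lattice 2. -/
open Set

/-- Membership in the Boolean subalgebra of the powerset of `P` generated by the
lower subsets of `P`: the smallest family of subsets of `P` containing all lower
sets and closed under complementation and (binary) union (hence also under binary
intersection, and containing `∅` and `P`). -/
inductive IntMem (P : Type*) [Preorder P] : Set P → Prop
  | lower (s : Set P) : IsLowerSet s → IntMem P s
  | compl (s : Set P) : IntMem P s → IntMem P sᶜ
  | union (s t : Set P) : IntMem P s → IntMem P t → IntMem P (s ∪ t)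

/-- `Int P`: the Boolean subalgebra of the powerset of `P` generated by the lower subsets
of `P`, viewed as a set of subsets of `P`. -/
def IntP (P : Type*) [Preorder P] : Set (Set P) := {s | IntMem P s}

open Classical in
/-- `χ_o` : sends a subset of `{β | β < o}` to `false` if it is bounded (contained in some
`α < o`) and to `true` otherwise. -/
noncomputable def chiO (o : Ordinal) (x : Set ↥(Set.Iio o)) : Bool :=
  if ∃ α < o, ∀ β ∈ x, (β : Ordinal) < α then false else true

/-! In a linear order without maximum, every lower set is either bounded or everything, so every
member of the Boolean algebra generated by the lower sets is bounded or has bounded complement,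
and never both. Boundedness is preserved by finite unions, so `χ` preserves joins; on such
"bounded or co-bounded" sets it also commutes with complements, hence with meets. -/

namespace Set

variable {α : Type*}

theorem Bounded.union [Preorder α] [IsDirected α (· ≤ ·)] {s t : Set α}
    (hs : Bounded (· < ·) s) (ht : Bounded (· < ·) t) : Bounded (· < ·) (s ∪ t) := by
  obtain ⟨a, ha⟩ := hs
  obtain ⟨b, hb⟩ := ht
  obtain ⟨c, hac, hbc⟩ := directed_of (· ≤ ·) a b
  exact ⟨c, fun x hx => hx.elim (fun h => (ha x h).trans_le hac) fun h => (hb x h).trans_le hbc⟩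

theorem bounded_lt_union [Preorder α] [IsDirected α (· ≤ ·)] {s t : Set α} :
    Bounded (· < ·) (s ∪ t) ↔ Bounded (· < ·) s ∧ Bounded (· < ·) t :=
  ⟨fun h => ⟨h.mono subset_union_left, h.mono subset_union_right⟩, fun h => h.1.union h.2⟩

theorem bounded_lt_empty [Preorder α] [Nonempty α] : Bounded (· < ·) (∅ : Set α) :=
  ⟨Classical.arbitrary α, fun _ h => h.elim⟩

theorem not_bounded_lt_and_bounded_lt_compl [Preorder α] [IsDirected α (· ≤ ·)] [NoMaxOrder α]
    (s : Set α) : ¬(Bounded (· < ·) s ∧ Bounded (· < ·) sᶜ) := fun h =>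
  (not_bounded_iff _).2 unbounded_lt_univ (union_compl_self s ▸ h.1.union h.2)

end Set

theorem IsLowerSet.bounded_lt_or_eq_univ {α : Type*} [LinearOrder α] {s : Set α}
    (hs : IsLowerSet s) : Bounded (· < ·) s ∨ s = univ :=
  or_iff_not_imp_left.2 fun h => eq_univ_of_forall fun a =>
    let ⟨_, hb, hab⟩ := unbounded_lt_iff.1 ((not_bounded_iff _).1 h) a
    hs hab hb

theorem IntMem.inter {P : Type*} [Preorder P] {s t : Set P} (hs : IntMem P s)
    (ht : IntMem P t) : IntMem P (s ∩ t) := by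
  simpa only [compl_union, compl_compl] using ((hs.compl _).union _ _ (ht.compl _)).compl

namespace IntMem

variable {P : Type*} [LinearOrder P] {s t : Set P}

theorem bounded_lt_or_bounded_lt_compl [Nonempty P] (hs : IntMem P s) :
    Bounded (· < ·) s ∨ Bounded (· < ·) sᶜ := by
  induction hs with
  | lower s hs =>
    refine hs.bounded_lt_or_eq_univ.imp_right fun h => ?_
    rw [h, compl_univ]
    exact bounded_lt_empty
  | compl s _ ih => rwa [compl_compl, or_comm]
  | union s t _ _ ihs iht =>
    rw [compl_union]
    rcases ihs with hs | hs
    · exact iht.imp hs.union fun ht => ht.mono inter_subset_right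
    · exact Or.inr (hs.mono inter_subset_left)

theorem bounded_lt_compl_iff [Nonempty P] [NoMaxOrder P] (hs : IntMem P s) :
    Bounded (· < ·) sᶜ ↔ ¬Bounded (· < ·) s :=
  ⟨fun hc h => not_bounded_lt_and_bounded_lt_compl s ⟨h, hc⟩,
    hs.bounded_lt_or_bounded_lt_compl.resolve_left⟩

theorem bounded_lt_inter_iff [Nonempty P] [NoMaxOrder P] (hs : IntMem P s) (ht : IntMem P t) :
    Bounded (· < ·) (s ∩ t) ↔ Bounded (· < ·) s ∨ Bounded (· < ·) t := by
  rw [← not_iff_not, ← (hs.inter ht).bounded_lt_compl_iff, compl_inter, bounded_lt_union,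
    hs.bounded_lt_compl_iff, ht.bounded_lt_compl_iff, not_or]

end IntMem

theorem chiO_eq_false_iff {o : Ordinal} {x : Set (Iio o)} :
    chiO o x = false ↔ Bounded (· < ·) x := by
  simp [chiO, Bounded]

theorem chiO_eq_true_iff {o : Ordinal} {x : Set (Iio o)} :
    chiO o x = true ↔ ¬Bounded (· < ·) x := by
  rw [← chiO_eq_false_iff, Bool.not_eq_false]

theorem chiO_union {o : Ordinal} (x y : Set (Iio o)) : chiO o (x ∪ y) = chiO o x ⊔ chiO o y := by
  rw [Bool.eq_iff_iff]
  simp only [Bool.max_eq_or, Bool.or_eq_true, chiO_eq_true_iff, bounded_lt_union,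
    not_and_or]

theorem chiO_inter {o : Ordinal} (ho : Order.IsSuccLimit o) {x y : Set (Iio o)}
    (hx : IntMem (Iio o) x) (hy : IntMem (Iio o) y) : chiO o (x ∩ y) = chiO o x ⊓ chiO o y := by
  have := ho.isSuccPrelimit.noMaxOrder_Iio
  have := ho.nonempty_Iio.to_subtype
  rw [Bool.eq_iff_iff]
  simp only [Bool.min_eq_and, Bool.and_eq_true, chiO_eq_true_iff,
    hx.bounded_lt_inter_iff hy, not_or]

/-- For every limit ordinal `λ`, the map `χ_λ : Int λ → 2` is a surjective
homomorphism preserving binary joins, binary meets, `0` and `1`, from the Boolean algebra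
`Int λ` onto the two-element bounded lattice `2` (here realized as `Bool`). -/
theorem chi_is_surjective_bounded_lattice_hom (lam : Ordinal) (hlam : Order.IsSuccLimit lam) :
    chiO lam (∅ : Set ↥(Set.Iio lam)) = false ∧
    chiO lam (univ : Set ↥(Set.Iio lam)) = true ∧
    (∀ x ∈ IntP ↥(Set.Iio lam), ∀ y ∈ IntP ↥(Set.Iio lam),
      chiO lam (x ∪ y) = chiO lam x ⊔ chiO lam y) ∧
    (∀ x ∈ IntP ↥(Set.Iio lam), ∀ y ∈ IntP ↥(Set.Iio lam),
      chiO lam (x ∩ y) = chiO lam x ⊓ chiO lam y) ∧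
    (∀ c : Bool, ∃ x ∈ IntP ↥(Set.Iio lam), chiO lam x = c) := by
  have := hlam.isSuccPrelimit.noMaxOrder_Iio
  have := hlam.nonempty_Iio.to_subtype
  have hempty : chiO lam ∅ = false := chiO_eq_false_iff.2 bounded_lt_empty
  have huniv : chiO lam univ = true :=
    chiO_eq_true_iff.2 ((not_bounded_iff _).2 unbounded_lt_univ)
  refine ⟨hempty, huniv, fun x _ y _ => chiO_union x y, fun x hx y hy => chiO_inter hlam hx hy, ?_⟩
  rintro (_ | _)
  · exact ⟨∅, IntMem.lower ∅ isLowerSet_empty, hempty⟩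
  · exact ⟨univ, IntMem.lower univ isLowerSet_univ, huniv⟩
end
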